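/- If K ∈ Γ̃_{1,p} has first row equal to (1,0,0,0), then K lies in the subgroup of Γ̃_{1,p} generated by M̃₁, M̃₄, and the images j̃₁(SL(2,ℤ)) and j̃₂(Γ₁(p)). -/

import Mathlib

open Matrix

/-- The symplectic form `Λ` over `ℤ`. -/
def LambdaZ (p : ℕ) : Matrix (Fin 4) (Fin 4) ℤ :=
  !![0,0,1,0; 0,0,0,(p:ℤ); -1,0,0,0; 0,-(p:ℤ),0,0]

/-- Membership in `Γ̃_{1,p} ⊆ Sp(Λ,ℤ)`: `γ Λ γᵀ = Λ`, second row `≡ (0,1,0,0)` and fourth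
row `≡ (0,0,0,1)` mod `p`. -/
def TildeGammaMem (p : ℕ) (γ : Matrix (Fin 4) (Fin 4) ℤ) : Prop :=
  γ * LambdaZ p * γ.transpose = LambdaZ p ∧
  (p : ℤ) ∣ γ 1 0 ∧ (p : ℤ) ∣ (γ 1 1 - 1) ∧ (p : ℤ) ∣ γ 1 2 ∧ (p : ℤ) ∣ γ 1 3 ∧
  (p : ℤ) ∣ γ 3 0 ∧ (p : ℤ) ∣ γ 3 1 ∧ (p : ℤ) ∣ γ 3 2 ∧ (p : ℤ) ∣ (γ 3 3 - 1)

/-- A vector `v ∈ ℤ⁴` is short (w.r.t. `Λ`) if `v Λ wᵀ = 1` for some `w ∈ ℤ⁴`. -/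
def IsShort (p : ℕ) (v : Fin 4 → ℤ) : Prop :=
  ∃ w : Fin 4 → ℤ, v ⬝ᵥ (LambdaZ p).mulVec w = 1

/-- Membership in `Γ₁(p) ⊆ SL(2,ℤ)`: determinant 1 and congruent to the identity mod `p`. -/
def Gamma1Mem (p : ℕ) (A : Matrix (Fin 2) (Fin 2) ℤ) : Prop :=
  A.det = 1 ∧ (p : ℤ) ∣ (A 0 0 - 1) ∧ (p : ℤ) ∣ A 0 1 ∧
    (p : ℤ) ∣ A 1 0 ∧ (p : ℤ) ∣ (A 1 1 - 1)

/-- The matrix `M̃₁`. -/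
def Mt1 (p : ℕ) : Matrix (Fin 4) (Fin 4) ℤ := !![1,0,0,0; 0,1,0,0; 0,1,1,0; (p:ℤ),0,0,1]

/-- The matrix `M̃₂`. -/
def Mt2 (p : ℕ) : Matrix (Fin 4) (Fin 4) ℤ := !![1,0,0,1; 0,1,(p:ℤ),0; 0,0,1,0; 0,0,0,1]

/-- The matrix `M̃₃`. -/
def Mt3 (p : ℕ) : Matrix (Fin 4) (Fin 4) ℤ := !![1,1,0,0; 0,1,0,0; 0,0,1,0; 0,0,-(p:ℤ),1]

/-- The matrix `M̃₄`. -/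
def Mt4 (p : ℕ) : Matrix (Fin 4) (Fin 4) ℤ := !![1,0,0,0; -(p:ℤ),1,0,0; 0,0,1,1; 0,0,0,1]

/-- The embedding `j̃₁ : SL(2,ℤ) → Sp(Λ,ℤ)` on matrices. -/
def jt1mat (A : Matrix (Fin 2) (Fin 2) ℤ) : Matrix (Fin 4) (Fin 4) ℤ :=
  !![A 0 0, 0, A 0 1, 0; 0,1,0,0; A 1 0, 0, A 1 1, 0; 0,0,0,1]

/-- The embedding `j̃₂ : Γ₁(p) → Sp(Λ,ℤ)` on matrices. -/
def jt2mat (A : Matrix (Fin 2) (Fin 2) ℤ) : Matrix (Fin 4) (Fin 4) ℤ :=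
  !![1,0,0,0; 0,A 0 0,0,A 0 1; 0,0,1,0; 0,A 1 0,0,A 1 1]

/-- The generators of STATEMENT 6, as elements of `SL(4,ℤ)`:
`M̃₁`, `M̃₄`, `j̃₁(SL(2,ℤ))` and `j̃₂(Γ₁(p))`. -/
def gens6 (p : ℕ) : Set (Matrix.SpecialLinearGroup (Fin 4) ℤ) :=
  {g | (↑g = Mt1 p) ∨ (↑g = Mt4 p) ∨
       (∃ A : Matrix (Fin 2) (Fin 2) ℤ, A.det = 1 ∧ ↑g = jt1mat A) ∨
       (∃ A : Matrix (Fin 2) (Fin 2) ℤ, Gamma1Mem p A ∧ ↑g = jt2mat A)}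

/-! ### Auxiliary machinery -/

def m1n (p : ℕ) (n : ℤ) : Matrix (Fin 4) (Fin 4) ℤ :=
  !![1,0,0,0; 0,1,0,0; 0,n,1,0; n*p,0,0,1]

def m4n (p : ℕ) (n : ℤ) : Matrix (Fin 4) (Fin 4) ℤ :=
  !![1,0,0,0; -(n*p),1,0,0; 0,0,1,n; 0,0,0,1]

lemma m1n_det (p : ℕ) (n : ℤ) : (m1n p n).det = 1 := by
  simp [m1n, Matrix.det_succ_row_zero, Fin.sum_univ_succ, Fin.succAbove, - Fin.val_fin_lt]

lemma m4n_det (p : ℕ) (n : ℤ) : (m4n p n).det = 1 := by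
  simp [m4n, Matrix.det_succ_row_zero, Fin.sum_univ_succ, Fin.succAbove, - Fin.val_fin_lt]

lemma jt1_det (A : Matrix (Fin 2) (Fin 2) ℤ) (h : A.det = 1) : (jt1mat A).det = 1 := by
  simp [jt1mat, Matrix.det_succ_row_zero, Fin.sum_univ_succ, Fin.succAbove, - Fin.val_fin_lt]
  rw [Matrix.det_fin_two] at h; linarith

lemma jt2_det (A : Matrix (Fin 2) (Fin 2) ℤ) (h : A.det = 1) : (jt2mat A).det = 1 := by
  simp [jt2mat, Matrix.det_succ_row_zero, Fin.sum_univ_succ, Fin.succAbove, - Fin.val_fin_lt]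
  rw [Matrix.det_fin_two] at h; linarith

def M1elt (p : ℕ) (n : ℤ) : Matrix.SpecialLinearGroup (Fin 4) ℤ := ⟨m1n p n, m1n_det p n⟩
def M4elt (p : ℕ) (n : ℤ) : Matrix.SpecialLinearGroup (Fin 4) ℤ := ⟨m4n p n, m4n_det p n⟩

lemma M1elt_mul (p : ℕ) (m n : ℤ) : M1elt p m * M1elt p n = M1elt p (m+n) := by
  apply Subtype.ext
  show m1n p m * m1n p n = m1n p (m+n)
  ext i j
  fin_cases i <;> fin_cases j <;>
    simp [m1n, Matrix.mul_apply, Fin.sum_univ_four, Matrix.vecHead, Matrix.vecTail] <;> ring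

lemma M4elt_mul (p : ℕ) (m n : ℤ) : M4elt p m * M4elt p n = M4elt p (m+n) := by
  apply Subtype.ext
  show m4n p m * m4n p n = m4n p (m+n)
  ext i j
  fin_cases i <;> fin_cases j <;>
    simp [m4n, Matrix.mul_apply, Fin.sum_univ_four, Matrix.vecHead, Matrix.vecTail] <;> ring

lemma M1elt_zero (p : ℕ) : M1elt p 0 = 1 := by
  apply Subtype.ext
  show m1n p 0 = (1 : Matrix (Fin 4) (Fin 4) ℤ)
  ext i j
  fin_cases i <;> fin_cases j <;> simp [m1n, Matrix.one_apply, Matrix.vecHead, Matrix.vecTail]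

lemma M4elt_zero (p : ℕ) : M4elt p 0 = 1 := by
  apply Subtype.ext
  show m4n p 0 = (1 : Matrix (Fin 4) (Fin 4) ℤ)
  ext i j
  fin_cases i <;> fin_cases j <;> simp [m4n, Matrix.one_apply, Matrix.vecHead, Matrix.vecTail]

lemma M1elt_mem (p : ℕ) (n : ℤ) : M1elt p n ∈ Subgroup.closure (gens6 p) := by
  have h1 : M1elt p 1 ∈ Subgroup.closure (gens6 p) := by
    refine Subgroup.subset_closure (Or.inl ?_)
    show m1n p 1 = Mt1 p
    simp [m1n, Mt1]
  induction n using Int.induction_on with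
  | zero => rw [M1elt_zero]; exact one_mem _
  | succ i ih =>
      rw [← M1elt_mul]
      exact mul_mem ih h1
  | pred i ih =>
      have e : M1elt p (-(i:ℤ)-1) * M1elt p 1 = M1elt p (-(i:ℤ)) := by
        rw [M1elt_mul]; norm_num
      have : M1elt p (-(i:ℤ)-1) = M1elt p (-(i:ℤ)) * (M1elt p 1)⁻¹ := by
        rw [← e, mul_inv_cancel_right]
      rw [this]
      exact mul_mem ih (inv_mem h1)

lemma M4elt_mem (p : ℕ) (n : ℤ) : M4elt p n ∈ Subgroup.closure (gens6 p) := by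
  have h1 : M4elt p 1 ∈ Subgroup.closure (gens6 p) := by
    refine Subgroup.subset_closure (Or.inr (Or.inl ?_))
    show m4n p 1 = Mt4 p
    simp [m4n, Mt4]
  induction n using Int.induction_on with
  | zero => rw [M4elt_zero]; exact one_mem _
  | succ i ih =>
      rw [← M4elt_mul]
      exact mul_mem ih h1
  | pred i ih =>
      have e : M4elt p (-(i:ℤ)-1) * M4elt p 1 = M4elt p (-(i:ℤ)) := by
        rw [M4elt_mul]; norm_num
      have : M4elt p (-(i:ℤ)-1) = M4elt p (-(i:ℤ)) * (M4elt p 1)⁻¹ := by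
        rw [← e, mul_inv_cancel_right]
      rw [this]
      exact mul_mem ih (inv_mem h1)


set_option maxHeartbeats 1000000 in
lemma prod_eq (p : ℕ) (m yy zz : ℤ) (A : Matrix (Fin 2) (Fin 2) ℤ) :
    jt1mat !![1,0;m,1] * m4n p zz * m1n p yy * jt2mat A =
    !![1, 0, 0, 0;
       -(zz*p), A 0 0, 0, A 0 1;
       m + zz*yy*p, yy * A 0 0 + zz * A 1 0, 1, yy * A 0 1 + zz * A 1 1;
       yy*p, A 1 0, 0, A 1 1] := by
  ext i j
  fin_cases i <;> fin_cases j <;>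
    simp [jt1mat, jt2mat, m1n, m4n, Matrix.mul_apply, Fin.sum_univ_four,
      Matrix.vecHead, Matrix.vecTail] <;> ring

theorem statement6 (p : ℕ) (hp : p.Prime) (hodd : Odd p)
    (K : Matrix.SpecialLinearGroup (Fin 4) ℤ) (hK : TildeGammaMem p ↑K)
    (hrow : (K : Matrix (Fin 4) (Fin 4) ℤ) 0 = ![1, 0, 0, 0]) :
    K ∈ Subgroup.closure (gens6 p) := by
  obtain ⟨hsymp, hd10, hd11, hd12, hd13, hd30, hd31, hd32, hd33⟩ := hK
  have hpne : (p : ℤ) ≠ 0 := by exact_mod_cast hp.ne_zero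
  set M : Matrix (Fin 4) (Fin 4) ℤ := (K : Matrix (Fin 4) (Fin 4) ℤ) with hM
  -- entries of the symplectic relation
  have E1 : M 1 2 = 0 := by
    have h := congrFun (congrFun hsymp 0) 1
    simp [Matrix.mul_apply, Fin.sum_univ_four, LambdaZ, hrow, ← hM] at h
    linarith
  have E2 : M 2 2 = 1 := by
    have h := congrFun (congrFun hsymp 0) 2
    simp [Matrix.mul_apply, Fin.sum_univ_four, LambdaZ, hrow, ← hM] at h
    linarith
  have E3 : M 3 2 = 0 := by
    have h := congrFun (congrFun hsymp 0) 3
    simp [Matrix.mul_apply, Fin.sum_univ_four, LambdaZ, hrow, ← hM] at h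
    linarith
  have E4 : M 1 1 * M 3 3 - M 1 3 * M 3 1 = 1 := by
    have h := congrFun (congrFun hsymp 1) 3
    simp [Matrix.mul_apply, Fin.sum_univ_four, LambdaZ, E1, E3, ← hM] at h
    apply mul_left_cancel₀ hpne
    linear_combination h
  have E5 : M 1 0 = -(p:ℤ) * (M 1 1 * M 2 3 - M 1 3 * M 2 1) := by
    have h := congrFun (congrFun hsymp 1) 2
    simp [Matrix.mul_apply, Fin.sum_univ_four, LambdaZ, E1, E2, ← hM] at h
    linear_combination h
  have E6 : M 3 0 = (p:ℤ) * (M 2 1 * M 3 3 - M 2 3 * M 3 1) := by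
    have h := congrFun (congrFun hsymp 2) 3
    simp [Matrix.mul_apply, Fin.sum_univ_four, LambdaZ, E2, E3, ← hM] at h
    linear_combination -h
  have h00 : M 0 0 = 1 := by rw [hrow]; rfl
  have h01 : M 0 1 = 0 := by rw [hrow]; rfl
  have h02 : M 0 2 = 0 := by rw [hrow]; rfl
  have h03 : M 0 3 = 0 := by rw [hrow]; rfl
  -- the Γ₁(p) matrix and the unipotent SL₂ matrix
  set A : Matrix (Fin 2) (Fin 2) ℤ := !![M 1 1, M 1 3; M 3 1, M 3 3] with hA
  have detA : A.det = 1 := by rw [hA, Matrix.det_fin_two_of]; linear_combination E4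
  have GA : Gamma1Mem p A := by
    refine ⟨detA, ?_, ?_, ?_, ?_⟩ <;> simp [hA] <;> assumption
  set B : Matrix (Fin 2) (Fin 2) ℤ :=
    !![1, 0; M 2 0 - (p:ℤ) * (M 3 3 * M 2 1 - M 3 1 * M 2 3) * (M 1 1 * M 2 3 - M 1 3 * M 2 1), 1]
    with hB
  have detB : B.det = 1 := by rw [hB, Matrix.det_fin_two_of]; ring
  set gJ1 : Matrix.SpecialLinearGroup (Fin 4) ℤ := ⟨jt1mat B, jt1_det B detB⟩ with hgJ1
  set gJ2 : Matrix.SpecialLinearGroup (Fin 4) ℤ := ⟨jt2mat A, jt2_det A detA⟩ with hgJ2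
  have key : K = gJ1 * M4elt p (M 1 1 * M 2 3 - M 1 3 * M 2 1)
      * M1elt p (M 3 3 * M 2 1 - M 3 1 * M 2 3) * gJ2 := by
    apply Subtype.ext
    show M = jt1mat B * m4n p (M 1 1 * M 2 3 - M 1 3 * M 2 1)
      * m1n p (M 3 3 * M 2 1 - M 3 1 * M 2 3) * jt2mat A
    rw [hB, prod_eq]
    ext i j
    fin_cases i <;> fin_cases j <;>
      simp [hA, Matrix.vecHead, Matrix.vecTail, h00, h01, h02, h03, E1, E2, E3] <;>
      first
        | ring1
        | linear_combination E5
        | linear_combination E6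
        | linear_combination (M 2 1) * E4
        | linear_combination (-(M 2 1)) * E4
        | linear_combination (M 2 3) * E4
        | linear_combination (-(M 2 3)) * E4
  rw [key]
  have hJ1 : gJ1 ∈ Subgroup.closure (gens6 p) :=
    Subgroup.subset_closure (Or.inr (Or.inr (Or.inl ⟨B, detB, rfl⟩)))
  have hJ2 : gJ2 ∈ Subgroup.closure (gens6 p) :=
    Subgroup.subset_closure (Or.inr (Or.inr (Or.inr ⟨A, GA, rfl⟩)))
  exact mul_mem (mul_mem (mul_mem hJ1 (M4elt_mem p _)) (M1elt_mem p _)) hJ2
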